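/- Let γ > 0 and let M be a γ-shape-regular d-dimensional simplicial mesh in ℝ^d (each element K satisfies h_K/ρ_K ≤ γ, with h_K the diameter and ρ_K the inradius). Then the number N of mesh elements of M sharing a given vertex v is bounded by N ≤ d · γ^d · ω_d/ω_{d-1}, where ω_n is the volume of the unit ball in ℝ^n. -/

import Mathlib

open MeasureTheory Metric
open scoped Classical
open scoped ENNReal

/-- Volume of the Euclidean unit ball in `ℝ^n`. -/
noncomputable def unitBallVol (n : ℕ) : ℝ :=
  (volume (Metric.ball (0 : EuclideanSpace ℝ (Fin n)) 1)).toReal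

lemma hull_small_null {d : ℕ} (S : Finset (EuclideanSpace ℝ (Fin d))) (hS : S.card ≤ d) :
    volume (convexHull ℝ (S : Set (EuclideanSpace ℝ (Fin d)))) = 0 := by
  apply measure_mono_null (convexHull_subset_affineSpan _)
  apply Measure.addHaar_affineSubspace
  intro htop
  rcases S.eq_empty_or_nonempty with rfl | hne
  · simp only [Finset.coe_empty, AffineSubspace.span_empty] at htop
    exact absurd htop bot_ne_top
  · obtain ⟨m, hm⟩ : ∃ m, S.card = m + 1 :=
      ⟨S.card - 1, (Nat.succ_pred_eq_of_pos (Finset.card_pos.2 hne)).symm⟩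
    have h1 : Module.finrank ℝ (vectorSpan ℝ (S : Set (EuclideanSpace ℝ (Fin d)))) ≤ m := by
      have := finrank_vectorSpan_image_finset_le ℝ (id : EuclideanSpace ℝ (Fin d) → _) S hm
      rwa [Finset.image_id] at this
    have h2 := AffineSubspace.vectorSpan_eq_top_of_affineSpan_eq_top ℝ _ _ htop
    rw [h2, finrank_top, finrank_euclideanSpace_fin] at h1
    omega

lemma gamma_half_le {x : ℝ} (hx : 1 ≤ x) :
    Real.Gamma x ≤ 2 * Real.sqrt Real.pi * Real.Gamma (x + 1/2) := by
  have h0 : (0:ℝ) < x - 1/2 := by linarith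
  have hx0 : (0:ℝ) < x := by linarith
  have h1 : (0:ℝ) < x + 1/2 := by linarith
  have hΓ1 : 0 < Real.Gamma (x - 1/2) := Real.Gamma_pos_of_pos h0
  have hΓ2 : 0 < Real.Gamma (x + 1/2) := Real.Gamma_pos_of_pos h1
  have hΓx : 0 < Real.Gamma x := Real.Gamma_pos_of_pos hx0
  have hπ : (0:ℝ) < Real.sqrt Real.pi := Real.sqrt_pos.2 Real.pi_pos
  have hconv := Real.convexOn_log_Gamma.2 (Set.mem_Ioi.2 h0) (Set.mem_Ioi.2 h1)
      (by norm_num : (0:ℝ) ≤ 1/2) (by norm_num : (0:ℝ) ≤ 1/2) (by norm_num)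
  have hmid : (1/2 : ℝ) • (x - 1/2) + (1/2 : ℝ) • (x + 1/2) = x := by
    simp only [smul_eq_mul]; ring
  rw [hmid] at hconv
  simp only [Function.comp_apply, smul_eq_mul] at hconv
  have hsq : Real.Gamma x ^ 2 ≤ Real.Gamma (x - 1/2) * Real.Gamma (x + 1/2) := by
    have h2 : Real.log (Real.Gamma x ^ 2) ≤
        Real.log (Real.Gamma (x - 1/2) * Real.Gamma (x + 1/2)) := by
      rw [Real.log_pow, Real.log_mul hΓ1.ne' hΓ2.ne']
      push_cast
      linarith
    exact (Real.log_le_log_iff (by positivity) (by positivity)).1 h2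
  have hrec : Real.Gamma (x + 1/2) = (x - 1/2) * Real.Gamma (x - 1/2) := by
    have := Real.Gamma_add_one (s := x - 1/2) h0.ne'
    rw [show x - 1/2 + 1 = x + 1/2 by ring] at this
    exact this
  have hkey : Real.Gamma x ^ 2 ≤ (2 * Real.sqrt Real.pi * Real.Gamma (x + 1/2)) ^ 2 := by
    have hG1 : Real.Gamma (x - 1/2) = Real.Gamma (x + 1/2) / (x - 1/2) := by
      rw [hrec, mul_div_cancel_left₀ _ h0.ne']
    have h3 : Real.Gamma x ^ 2 ≤ Real.Gamma (x + 1/2)^2 / (x - 1/2) := by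
      calc Real.Gamma x ^ 2 ≤ Real.Gamma (x - 1/2) * Real.Gamma (x + 1/2) := hsq
        _ = Real.Gamma (x + 1/2)^2 / (x - 1/2) := by rw [hG1]; ring
    have h4 : Real.Gamma (x + 1/2)^2 / (x - 1/2) ≤ 2 * Real.Gamma (x + 1/2)^2 := by
      rw [div_le_iff₀ h0]
      nlinarith [sq_nonneg (Real.Gamma (x + 1/2))]
    have h5 : (2 * Real.sqrt Real.pi * Real.Gamma (x + 1/2)) ^ 2
        = 4 * Real.pi * Real.Gamma (x + 1/2)^2 := by
      rw [mul_pow, mul_pow, Real.sq_sqrt Real.pi_pos.le]; ring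
    rw [h5]
    nlinarith [Real.pi_gt_three, sq_nonneg (Real.Gamma (x + 1/2))]
  exact (pow_le_pow_iff_left₀ hΓx.le (by positivity) (by norm_num : (2:ℕ) ≠ 0)).1 hkey

lemma unitBallVol_pos (n : ℕ) : 0 < unitBallVol n := by
  rw [unitBallVol]
  refine ENNReal.toReal_pos (measure_ball_pos volume _ one_pos).ne' ?_
  exact measure_ball_lt_top.ne

lemma unitBallVol_zero : unitBallVol 0 = 1 := by
  have h : (Metric.ball (0 : EuclideanSpace ℝ (Fin 0)) 1) = Set.univ := by
    ext x
    simp [Metric.mem_ball, show x = 0 from Subsingleton.elim x 0]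
  rw [unitBallVol, h]
  have := (EuclideanSpace.volume_preserving_symm_measurableEquiv_toLp (Fin 0)).measure_preimage
      (MeasurableSet.univ.nullMeasurableSet)
  simp only [Set.preimage_univ] at this
  rw [this]
  simp [MeasureTheory.volume_pi, Measure.pi_univ]

lemma unitBallVol_eq (n : ℕ) (hn : 1 ≤ n) :
    unitBallVol n = Real.sqrt Real.pi ^ n / Real.Gamma (n / 2 + 1) := by
  have : Nonempty (Fin n) := Fin.pos_iff_nonempty.1 hn
  rw [unitBallVol, EuclideanSpace.volume_ball]
  rw [ENNReal.toReal_mul, ENNReal.toReal_pow, ENNReal.toReal_ofReal one_pos.le, one_pow, one_mul,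
    ENNReal.toReal_ofReal (by positivity), Fintype.card_fin]

lemma unitBallVol_succ_le {d : ℕ} (hd : 1 ≤ d) :
    unitBallVol (d - 1) ≤ d * unitBallVol d := by
  have hπ : (0:ℝ) < Real.sqrt Real.pi := Real.sqrt_pos.2 Real.pi_pos
  rcases Nat.lt_or_ge d 2 with h2 | h2
  · interval_cases d
    rw [unitBallVol_zero, unitBallVol_eq 1 le_rfl]
    have hΓ : Real.Gamma ((1:ℕ) / 2 + 1) = Real.sqrt Real.pi / 2 := by
      push_cast
      rw [show (1:ℝ)/2 + 1 = 1/2 + 1 by norm_num,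
        Real.Gamma_add_one (by norm_num : (1:ℝ)/2 ≠ 0), Real.Gamma_one_half_eq]
      ring
    rw [hΓ]
    rw [pow_one, Nat.cast_one, one_mul, le_div_iff₀ (by positivity)]
    nlinarith
  · have hd1 : 1 ≤ d - 1 := by omega
    rw [unitBallVol_eq _ hd1, unitBallVol_eq d hd]
    have hcast : ((d - 1 : ℕ) : ℝ) = (d : ℝ) - 1 := by
      push_cast [Nat.cast_sub hd]; ring
    have hdpos : (0:ℝ) < d := by positivity
    have hx : (1:ℝ) ≤ (d:ℝ) / 2 := by
      have : (2:ℝ) ≤ d := by exact_mod_cast h2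
      linarith
    have hΓ1 : 0 < Real.Gamma ((d:ℝ) / 2 + 1) := Real.Gamma_pos_of_pos (by linarith)
    have hΓ2 : 0 < Real.Gamma (((d-1:ℕ):ℝ) / 2 + 1) := by
      rw [hcast]; exact Real.Gamma_pos_of_pos (by linarith)
    have e1 : ((d-1:ℕ):ℝ)/2 + 1 = (d:ℝ)/2 + 1/2 := by rw [hcast]; ring
    have key : Real.Gamma ((d:ℝ)/2+1) ≤
        (d:ℝ) * Real.sqrt Real.pi * Real.Gamma (((d-1:ℕ):ℝ)/2+1) := by
      rw [e1]
      have h := gamma_half_le hx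
      have hrec : Real.Gamma ((d:ℝ)/2 + 1) = ((d:ℝ)/2) * Real.Gamma ((d:ℝ)/2) :=
        Real.Gamma_add_one (ne_of_gt (by linarith))
      rw [hrec]
      calc ((d:ℝ)/2) * Real.Gamma ((d:ℝ)/2)
          ≤ ((d:ℝ)/2) * (2 * Real.sqrt Real.pi * Real.Gamma ((d:ℝ)/2 + 1/2)) :=
            mul_le_mul_of_nonneg_left h (by positivity)
        _ = (d:ℝ) * Real.sqrt Real.pi * Real.Gamma ((d:ℝ)/2 + 1/2) := by ring
    rw [mul_div_assoc' (d:ℝ), div_le_div_iff₀ hΓ2 hΓ1]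
    have epow : Real.sqrt Real.pi ^ d = Real.sqrt Real.pi ^ (d-1) * Real.sqrt Real.pi := by
      rw [← pow_succ]; congr 1; omega
    calc Real.sqrt Real.pi ^ (d-1) * Real.Gamma ((d:ℝ)/2+1)
        ≤ Real.sqrt Real.pi ^ (d-1) *
            ((d:ℝ) * Real.sqrt Real.pi * Real.Gamma (((d-1:ℕ):ℝ)/2+1)) :=
          mul_le_mul_of_nonneg_left key (by positivity)
      _ = (d:ℝ) * Real.sqrt Real.pi ^ d * Real.Gamma (((d-1:ℕ):ℝ)/2+1) := by rw [epow]; ring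

/-- In a `γ`-shape-regular `d`-dimensional simplicial mesh in `ℝ^d`, the number of
mesh elements sharing a given vertex `v` is at most `d γ^d ω_d / ω_{d-1}`. -/
theorem shape_regular_vertex_bound
    (d : ℕ) (hd : 1 ≤ d) (γ : ℝ) (hγ : 0 < γ)
    (M : Finset (Finset (EuclideanSpace ℝ (Fin d))))
    (hsimp : ∀ K ∈ M, K.card = d + 1 ∧
      AffineIndependent ℝ (fun x : {x // x ∈ K} => (x : EuclideanSpace ℝ (Fin d))))
    (hconf : ∀ K ∈ M, ∀ K' ∈ M,
      (convexHull ℝ (K : Set (EuclideanSpace ℝ (Fin d)))) ∩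
        (convexHull ℝ (K' : Set (EuclideanSpace ℝ (Fin d)))) =
        convexHull ℝ ((K ∩ K' : Finset (EuclideanSpace ℝ (Fin d))) : Set (EuclideanSpace ℝ (Fin d))))
    (hreg : ∀ K ∈ M, Metric.diam (convexHull ℝ (K : Set (EuclideanSpace ℝ (Fin d)))) ≤
      γ * sSup {r : ℝ | ∃ c, Metric.closedBall c r ⊆
        convexHull ℝ (K : Set (EuclideanSpace ℝ (Fin d)))})
    (v : EuclideanSpace ℝ (Fin d)) :
    ((M.filter fun K => v ∈ K).card : ℝ) ≤
      d * γ ^ d * (unitBallVol d / unitBallVol (d - 1)) := by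
  classical
  have hVd := unitBallVol_pos d
  have hVd1 := unitBallVol_pos (d - 1)
  set F := M.filter (fun K => v ∈ K) with hFdef
  have hRHS0 : (0:ℝ) ≤ d * γ ^ d * (unitBallVol d / unitBallVol (d - 1)) := by positivity
  rcases F.eq_empty_or_nonempty with hFe | hFne
  · rw [hFe]; simpa using hRHS0
  -- notation
  have hvhull : ∀ K ∈ F, v ∈ convexHull ℝ (K : Set (EuclideanSpace ℝ (Fin d))) := by
    intro K hK
    exact subset_convexHull ℝ _ (by exact_mod_cast (Finset.mem_filter.1 hK).2)
  have hbdd : ∀ K ∈ M, Bornology.IsBounded (convexHull ℝ (K : Set (EuclideanSpace ℝ (Fin d)))) :=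
    fun K _ => (K.finite_toSet.isCompact_convexHull ℝ).isBounded
  have hdiam_pos : ∀ K ∈ F, 0 < diam (convexHull ℝ (K : Set (EuclideanSpace ℝ (Fin d)))) := by
    intro K hK
    have hKM := (Finset.mem_filter.1 hK).1
    have hcard := (hsimp K hKM).1
    obtain ⟨x, hx, y, hy, hxy⟩ := Finset.one_lt_card.1 (by omega : 1 < K.card)
    have h1 : dist x y ≤ diam (convexHull ℝ (K : Set (EuclideanSpace ℝ (Fin d)))) :=
      dist_le_diam_of_mem (hbdd K hKM) (subset_convexHull ℝ _ hx) (subset_convexHull ℝ _ hy)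
    have h2 : 0 < dist x y := dist_pos.2 hxy
    linarith
  set r := F.inf' hFne (fun K => diam (convexHull ℝ (K : Set (EuclideanSpace ℝ (Fin d)))))
    with hrdef
  have hr_pos : 0 < r := (Finset.lt_inf'_iff hFne).2 hdiam_pos
  have hr_le : ∀ K ∈ F, r ≤ diam (convexHull ℝ (K : Set (EuclideanSpace ℝ (Fin d)))) :=
    fun K hK => Finset.inf'_le _ hK
  set a := r / γ with hadef
  have ha : 0 < a := div_pos hr_pos hγ
  -- the per-scale bound
  have main : ∀ s : ℝ, s ∈ Set.Ioo 0 a → (F.card : ℝ) * s ^ d ≤ r ^ d := by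
    intro s hs
    obtain ⟨hs0, hsa⟩ := hs
    have hball : ∀ K ∈ F, ∃ (m : EuclideanSpace ℝ (Fin d)) (ρ : ℝ), s ≤ ρ ∧
        closedBall m ρ ⊆ convexHull ℝ (K : Set (EuclideanSpace ℝ (Fin d))) ∧
        closedBall m ρ ⊆ closedBall v r := by
      intro K hK
      have hKM := (Finset.mem_filter.1 hK).1
      set h := diam (convexHull ℝ (K : Set (EuclideanSpace ℝ (Fin d)))) with hh
      have hh_pos : 0 < h := hdiam_pos K hK
      have hrh : r ≤ h := hr_le K hK
      have hρ := hreg K hKM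
      have hne : {ρ : ℝ | ∃ c, closedBall c ρ ⊆
          convexHull ℝ (K : Set (EuclideanSpace ℝ (Fin d)))}.Nonempty := by
        refine ⟨-1, v, ?_⟩
        rw [closedBall_eq_empty.2 (by norm_num : (-1:ℝ) < 0)]
        exact Set.empty_subset _
      have hlt : s * h / r < sSup {ρ : ℝ | ∃ c, closedBall c ρ ⊆
          convexHull ℝ (K : Set (EuclideanSpace ℝ (Fin d)))} := by
        have h1 : h / γ ≤ sSup {ρ : ℝ | ∃ c, closedBall c ρ ⊆
            convexHull ℝ (K : Set (EuclideanSpace ℝ (Fin d)))} :=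
          (div_le_iff₀' hγ).2 hρ
        have hsγ : s * γ < r := by
          have := (lt_div_iff₀ hγ).1 hsa
          linarith
        have h2 : s * h / r < h / γ := by
          rw [div_lt_div_iff₀ hr_pos hγ]
          nlinarith
        linarith
      obtain ⟨s', hs'mem, hs'gt⟩ := exists_lt_of_lt_csSup hne hlt
      obtain ⟨c, hc⟩ := hs'mem
      set t := r / h with htdef
      have ht0 : 0 < t := div_pos hr_pos hh_pos
      have ht1 : t ≤ 1 := (div_le_one hh_pos).2 hrh
      have hth : t * h = r := div_mul_cancel₀ r hh_pos.ne'
      have hb_pos : 0 < s * h / r := by positivity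
      refine ⟨v + t • (c - v), t * s', ?_, ?_⟩
      · have heq : t * (s * h / r) = s := by
          rw [htdef]; field_simp
        have := mul_lt_mul_of_pos_left hs'gt ht0
        rw [heq] at this
        exact this.le
      · have hmem : ∀ y ∈ closedBall (v + t • (c - v)) (t * s'),
            ∃ z ∈ closedBall c s', y = (1 - t) • v + t • z := by
          intro y hy
          refine ⟨c + t⁻¹ • (y - (v + t • (c - v))), ?_, ?_⟩
          · rw [mem_closedBall, dist_eq_norm, add_sub_cancel_left, norm_smul,
              Real.norm_eq_abs, abs_of_pos (inv_pos.2 ht0)]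
            rw [mem_closedBall, dist_eq_norm] at hy
            calc t⁻¹ * ‖y - (v + t • (c - v))‖ ≤ t⁻¹ * (t * s') :=
                  mul_le_mul_of_nonneg_left hy (inv_pos.2 ht0).le
              _ = s' := by field_simp
          · have h1 : t • (c + t⁻¹ • (y - (v + t • (c - v))))
                = t • c + (y - (v + t • (c - v))) := by
              rw [smul_add, smul_smul, mul_inv_cancel₀ ht0.ne', one_smul]
            rw [h1]; module
        constructor
        · intro y hy
          obtain ⟨z, hz, hyz⟩ := hmem y hy
          rw [hyz]
          exact (convex_convexHull ℝ _) (hvhull K hK) (hc hz)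
            (by linarith) ht0.le (by ring)
        · intro y hy
          obtain ⟨z, hz, hyz⟩ := hmem y hy
          rw [mem_closedBall]
          have hdyv : dist y v = t * dist z v := by
            rw [hyz, dist_eq_norm, dist_eq_norm]
            have e2 : (1 - t) • v + t • z - v = t • (z - v) := by module
            rw [e2, norm_smul, Real.norm_eq_abs, abs_of_pos ht0]
          have hzv : dist z v ≤ h := dist_le_diam_of_mem (hbdd K hKM) (hc hz) (hvhull K hK)
          calc dist y v = t * dist z v := hdyv
            _ ≤ t * h := mul_le_mul_of_nonneg_left hzv ht0.le
            _ = r := hth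
    choose! m ρ hρle hsub1 hsub2 using hball
    set V := volume (ball (0 : EuclideanSpace ℝ (Fin d)) 1) with hV
    have hVpos : 0 < V := measure_ball_pos _ _ one_pos
    have hVtop : V ≠ ⊤ := measure_ball_lt_top.ne
    have hnull : ∀ K ∈ F, ∀ K' ∈ F, K ≠ K' →
        volume ((convexHull ℝ (K : Set (EuclideanSpace ℝ (Fin d)))) ∩
          (convexHull ℝ (K' : Set (EuclideanSpace ℝ (Fin d))))) = 0 := by
      intro K hK K' hK' hne
      have hKM := (Finset.mem_filter.1 hK).1
      have hK'M := (Finset.mem_filter.1 hK').1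
      rw [hconf K hKM K' hK'M]
      apply hull_small_null
      have hss : K ∩ K' ⊂ K := by
        refine ⟨Finset.inter_subset_left, ?_⟩
        intro hsub
        refine hne (Finset.eq_of_subset_of_card_le
          (fun x hx => (Finset.mem_inter.1 (hsub hx)).2) ?_)
        rw [(hsimp K hKM).1, (hsimp K' hK'M).1]
      have hcl := Finset.card_lt_card hss
      rw [(hsimp K hKM).1] at hcl
      omega
    have hdisj : (F : Set (Finset (EuclideanSpace ℝ (Fin d)))).Pairwise
        (Function.onFun (AEDisjoint volume) (fun K => closedBall (m K) (ρ K))) := by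
      intro K hK K' hK' hne
      have hKF : K ∈ F := hK
      have hK'F : K' ∈ F := hK'
      exact measure_mono_null
        (Set.inter_subset_inter (hsub1 K hKF) (hsub1 K' hK'F))
        (hnull K hKF K' hK'F hne)
    have hmeas : ∀ K ∈ F, NullMeasurableSet (closedBall (m K) (ρ K)) volume :=
      fun K _ => measurableSet_closedBall.nullMeasurableSet
    have hsum := measure_biUnion_finset₀ hdisj hmeas
    have hunion_le : volume (⋃ K ∈ F, closedBall (m K) (ρ K)) ≤ volume (closedBall v r) :=
      measure_mono (Set.iUnion₂_subset hsub2)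
    have hlow : ∀ K ∈ F, ENNReal.ofReal (s ^ d) * V ≤ volume (closedBall (m K) (ρ K)) := by
      intro K hK
      rw [Measure.addHaar_closedBall _ _ (le_trans hs0.le (hρle K hK)),
        finrank_euclideanSpace_fin]
      exact mul_le_mul_left
        (ENNReal.ofReal_le_ofReal (pow_le_pow_left₀ hs0.le (hρle K hK) d)) V
    have hcard_le : (F.card : ℝ≥0∞) * ENNReal.ofReal (s ^ d) * V ≤ ENNReal.ofReal (r ^ d) * V := by
      calc (F.card : ℝ≥0∞) * ENNReal.ofReal (s ^ d) * V
          = F.card • (ENNReal.ofReal (s ^ d) * V) := by rw [nsmul_eq_mul, mul_assoc]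
        _ ≤ ∑ K ∈ F, volume (closedBall (m K) (ρ K)) := Finset.card_nsmul_le_sum F _ _ hlow
        _ = volume (⋃ K ∈ F, closedBall (m K) (ρ K)) := hsum.symm
        _ ≤ volume (closedBall v r) := hunion_le
        _ = ENNReal.ofReal (r ^ d) * V := by
            rw [Measure.addHaar_closedBall _ _ hr_pos.le, finrank_euclideanSpace_fin]
    have h1 := (ENNReal.mul_le_mul_iff_left hVpos.ne' hVtop).1 hcard_le
    have h2 : ENNReal.ofReal ((F.card : ℝ) * s ^ d) ≤ ENNReal.ofReal (r ^ d) := by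
      rw [ENNReal.ofReal_mul (by positivity), ENNReal.ofReal_natCast]
      exact h1
    exact (ENNReal.ofReal_le_ofReal_iff (by positivity)).1 h2
  -- pass to the limit s → a⁻
  have hlim : (F.card : ℝ) * a ^ d ≤ r ^ d := by
    have hc : Filter.Tendsto (fun s : ℝ => (F.card : ℝ) * s ^ d)
        (nhdsWithin a (Set.Iio a)) (nhds ((F.card : ℝ) * a ^ d)) :=
      ((continuous_const.mul (continuous_pow d)).tendsto a).mono_left nhdsWithin_le_nhds
    refine le_of_tendsto hc ?_
    filter_upwards [Ioo_mem_nhdsLT ha] with s hs using main s hs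
  have hapow : 0 < a ^ d := pow_pos ha d
  have hcard : (F.card : ℝ) ≤ γ ^ d := by
    have h1 : (F.card : ℝ) ≤ r ^ d / a ^ d := (le_div_iff₀ hapow).2 hlim
    have h2 : r ^ d / a ^ d = γ ^ d := by
      rw [hadef, div_pow, div_div_eq_mul_div, mul_comm, mul_div_assoc,
        div_self (pow_pos hr_pos d).ne', mul_one]
    rwa [h2] at h1
  calc (F.card : ℝ) ≤ γ ^ d := hcard
    _ = γ ^ d * 1 := (mul_one _).symm
    _ ≤ γ ^ d * ((d : ℝ) * (unitBallVol d / unitBallVol (d - 1))) := by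
        refine mul_le_mul_of_nonneg_left ?_ (by positivity)
        rw [mul_div_assoc']
        exact (one_le_div hVd1).2 (unitBallVol_succ_le hd)
    _ = d * γ ^ d * (unitBallVol d / unitBallVol (d - 1)) := by ring
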